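/- Define k(x,y) = sum over i,j in {+1,-1} of ((1+i*x)*(1+j*y)/4) * log2(1 + ((1-i*x)*(1-j*y))/((1+i*x)*(1+j*y))) for x,y in (0,1). Then the fourth mixed partial derivative d^4 k / dx^2 dy^2 equals (2/ln 2)*(1 + 3*x^2*y^2)/(1 - x^2*y^2)^3, and this satisfies the bound (2/ln 2)*(1+3x^2y^2)/(1-x^2y^2)^3 <= (8/ln 2)*(1-x^2)^(-3/2)*(1-y^2)^(-3/2). -/

import Mathlib

/-- The GEXIT/entropy kernel
`k(x,y) = ∑_{i,j=±1} ((1+ix)(1+jy)/4) log₂(1 + ((1-ix)(1-jy))/((1+ix)(1+jy)))`. -/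
noncomputable def kker (x y : ℝ) : ℝ :=
    ((1+x)*(1+y)/4) * Real.logb 2 (1 + ((1-x)*(1-y))/((1+x)*(1+y)))
  + ((1+x)*(1-y)/4) * Real.logb 2 (1 + ((1-x)*(1+y))/((1+x)*(1-y)))
  + ((1-x)*(1+y)/4) * Real.logb 2 (1 + ((1+x)*(1-y))/((1-x)*(1+y)))
  + ((1-x)*(1-y)/4) * Real.logb 2 (1 + ((1+x)*(1+y))/((1-x)*(1-y)))

/-!
With `C(t) = ((1 + t) log₂(1 + t) + (1 - t) log₂(1 - t)) / 2` the kernel splits as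
`k(x, y) = 1 + C(xy) - C(x) - C(y)`, because the argument of each logarithm in `k` is
`2 (1 ± xy) / ((1 ± x)(1 ± y))`. As `C''(t) = 1 / ((1 - t²) ln 2)`, this gives
`∂²k/∂y² = (x² / (1 - x²y²) - 1 / (1 - y²)) / ln 2`, and two more derivatives in `x` are a
rational-function computation. For the bound, `1 + 3x²y² ≤ 4`, and with `A = 1 - x²`,
`B = 1 - y²` one has `1 - x²y² = A + B - AB ≥ √(AB)`.
-/

open Real Set Filter Topology

theorem eqOn_deriv_deriv_of_hasDerivAt {𝕜 F : Type*} [NontriviallyNormedField 𝕜]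
    [NormedAddCommGroup F] [NormedSpace 𝕜 F] {f g g' g'' : 𝕜 → F} {s : Set 𝕜} (hs : IsOpen s)
    (hfg : EqOn f g s) (hg : ∀ t ∈ s, HasDerivAt g (g' t) t)
    (hg' : ∀ t ∈ s, HasDerivAt g' (g'' t) t) :
    EqOn (deriv (deriv f)) g'' s := by
  intro t ht
  have hderiv : deriv f =ᶠ[𝓝 t] g' := by
    filter_upwards [hs.mem_nhds ht] with u hu
    exact ((hg u hu).congr_of_eventuallyEq
      (eventually_of_mem (hs.mem_nhds hu) hfg)).deriv
  rw [hderiv.deriv_eq, (hg' t ht).deriv]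

theorem logb_two_one_add_div_mul {p q r u : ℝ} (hp : p ≠ 0) (hq : q ≠ 0) (hr : r ≠ 0)
    (h : q * r + u = 2 * p) :
    logb 2 (1 + u / (q * r)) = 1 + logb 2 p - logb 2 q - logb 2 r := by
  rw [show 1 + u / (q * r) = 2 * p / (q * r) by field_simp; linarith,
    logb_div (by positivity) (by positivity), logb_mul two_ne_zero hp, logb_mul hq hr,
    logb_self_eq_one one_lt_two]
  ring

/-- `1 - h₂((1 - t)/2)`, the capacity of the binary symmetric channel with crossover
probability `(1 - t)/2`. -/
noncomputable def bscCapacity (t : ℝ) : ℝ :=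
  ((1 + t) * log (1 + t) + (1 - t) * log (1 - t)) / (2 * log 2)

theorem kker_eq_bscCapacity {a b : ℝ} (ha : a ∈ Ioo (-1) 1) (hb : b ∈ Ioo (-1) 1) :
    kker a b = 1 + bscCapacity (a * b) - bscCapacity a - bscCapacity b := by
  obtain ⟨ha₁, ha₂⟩ := ha
  obtain ⟨hb₁, hb₂⟩ := hb
  have hab₁ : 0 < 1 + a * b := by nlinarith
  have hab₂ : 0 < 1 - a * b := by nlinarith
  unfold kker
  rw [logb_two_one_add_div_mul hab₁.ne' (by linarith) (by linarith) (by ring),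
    logb_two_one_add_div_mul hab₂.ne' (by linarith) (by linarith) (by ring),
    logb_two_one_add_div_mul hab₂.ne' (by linarith) (by linarith) (by ring),
    logb_two_one_add_div_mul hab₁.ne' (by linarith) (by linarith) (by ring)]
  simp only [bscCapacity, logb]
  field_simp
  ring

theorem hasDerivAt_bscCapacity {t : ℝ} (ht : t ∈ Ioo (-1) 1) :
    HasDerivAt bscCapacity ((log (1 + t) - log (1 - t)) / (2 * log 2)) t := by
  have h₁ : 1 + t ≠ 0 := by linarith [ht.1]
  have h₂ : 1 - t ≠ 0 := by linarith [ht.2]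
  have hp := (hasDerivAt_id' t).const_add 1
  have hm := (hasDerivAt_id' t).const_sub 1
  have h : HasDerivAt (fun s ↦ ((1 + s) * log (1 + s) + (1 - s) * log (1 - s)) / (2 * log 2))
      ((1 * log (1 + t) + (1 + t) * (1 / (1 + t)) + (-1 * log (1 - t) + (1 - t) * (-1 / (1 - t))))
        / (2 * log 2)) t :=
    ((hp.mul (hp.log h₁)).add (hm.mul (hm.log h₂))).div_const _
  refine h.congr_deriv ?_
  field_simp
  ring

theorem hasDerivAt_deriv_bscCapacity {t : ℝ} (ht : t ∈ Ioo (-1) 1) :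
    HasDerivAt (deriv bscCapacity) (1 / (1 - t ^ 2) / log 2) t := by
  have h₁ : 1 + t ≠ 0 := by linarith [ht.1]
  have h₂ : 1 - t ≠ 0 := by linarith [ht.2]
  have hderiv :
      deriv bscCapacity =ᶠ[𝓝 t] fun s ↦ (log (1 + s) - log (1 - s)) / (2 * log 2) := by
    filter_upwards [isOpen_Ioo.mem_nhds ht] with s hs
    exact (hasDerivAt_bscCapacity hs).deriv
  have hp := (hasDerivAt_id' t).const_add 1
  have hm := (hasDerivAt_id' t).const_sub 1
  have h : HasDerivAt (fun s ↦ (log (1 + s) - log (1 - s)) / (2 * log 2))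
      ((1 / (1 + t) - -1 / (1 - t)) / (2 * log 2)) t :=
    ((hp.log h₁).sub (hm.log h₂)).div_const _
  refine (h.congr_of_eventuallyEq hderiv).congr_deriv ?_
  rw [show 1 - t ^ 2 = (1 + t) * (1 - t) by ring]
  field_simp
  ring

theorem deriv_deriv_kker_right {a : ℝ} (ha : a ∈ Ioo (-1) 1) :
    EqOn (deriv (deriv (kker a)))
      (fun b ↦ (a ^ 2 / (1 - (a * b) ^ 2) - 1 / (1 - b ^ 2)) / log 2) (Ioo (-1) 1) := by
  have hab {b : ℝ} (hb : b ∈ Ioo (-1) 1) : a * b ∈ Ioo (-1) 1 := by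
    obtain ⟨ha₁, ha₂⟩ := ha
    obtain ⟨hb₁, hb₂⟩ := hb
    constructor <;> nlinarith
  refine eqOn_deriv_deriv_of_hasDerivAt isOpen_Ioo (fun b hb ↦ kker_eq_bscCapacity ha hb)
    (g' := fun b ↦ a * deriv bscCapacity (a * b) - deriv bscCapacity b) (fun b hb ↦ ?_)
    (fun b hb ↦ ?_)
  · have hC : HasDerivAt (fun b ↦ bscCapacity (a * b)) (deriv bscCapacity (a * b) * a) b :=
      (hasDerivAt_bscCapacity (hab hb)).differentiableAt.hasDerivAt.comp b
        ((hasDerivAt_id' b).const_mul a |>.congr_deriv (mul_one a))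
    have h : HasDerivAt (fun b ↦ 1 + bscCapacity (a * b) - bscCapacity a - bscCapacity b)
        (deriv bscCapacity (a * b) * a - deriv bscCapacity b) b :=
      ((hC.const_add 1).sub_const _).sub (hasDerivAt_bscCapacity hb).differentiableAt.hasDerivAt
    exact h.congr_deriv (by ring)
  · have hC' : HasDerivAt (fun b ↦ deriv bscCapacity (a * b))
        (1 / (1 - (a * b) ^ 2) / log 2 * a) b :=
      (hasDerivAt_deriv_bscCapacity (hab hb)).comp b
        ((hasDerivAt_id' b).const_mul a |>.congr_deriv (mul_one a))
    have h : HasDerivAt (fun b ↦ a * deriv bscCapacity (a * b) - deriv bscCapacity b)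
        (a * (1 / (1 - (a * b) ^ 2) / log 2 * a) - 1 / (1 - b ^ 2) / log 2) b :=
      (hC'.const_mul a).sub (hasDerivAt_deriv_bscCapacity hb)
    exact h.congr_deriv (by ring)

theorem hasDerivAt_sq_div_one_sub_mul_sq (y : ℝ) {a : ℝ} (h : 1 - (a * y) ^ 2 ≠ 0) :
    HasDerivAt (fun a ↦ a ^ 2 / (1 - (a * y) ^ 2)) (2 * a / (1 - (a * y) ^ 2) ^ 2) a := by
  have hden := (((hasDerivAt_id' a).mul_const y).fun_pow 2).const_sub 1
  refine (((hasDerivAt_id' a).fun_pow 2).div hden h).congr_deriv ?_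
  field_simp
  ring

theorem hasDerivAt_two_mul_div_one_sub_mul_sq_sq (y : ℝ) {a : ℝ} (h : 1 - (a * y) ^ 2 ≠ 0) :
    HasDerivAt (fun a ↦ 2 * a / (1 - (a * y) ^ 2) ^ 2)
      (2 * (1 + 3 * (a * y) ^ 2) / (1 - (a * y) ^ 2) ^ 3) a := by
  have hden := ((((hasDerivAt_id' a).mul_const y).fun_pow 2).const_sub 1).fun_pow 2
  refine (((hasDerivAt_id' a).const_mul 2).div hden (pow_ne_zero 2 h)).congr_deriv ?_
  simp only [Nat.cast_ofNat, Nat.add_one_sub_one, pow_one, mul_one]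
  field_simp
  ring

-- `(A + B - AB)² - AB = ((1 - A) B)² + ((1 - B) A)² + AB (1 - AB)`
theorem mul_le_sq_add_sub_mul {A B : ℝ} (h₀ : 0 ≤ A * B) (h₁ : A * B ≤ 1) :
    A * B ≤ (A + B - A * B) ^ 2 := by
  nlinarith [sq_nonneg ((1 - A) * B), sq_nonneg ((1 - B) * A), mul_nonneg h₀ (sub_nonneg.2 h₁)]

theorem one_div_pow_three_le_rpow_mul_rpow {A B D : ℝ} (hA : 0 < A) (hB : 0 < B) (hD : 0 < D)
    (h : A * B ≤ D ^ 2) : 1 / D ^ 3 ≤ A ^ (-(3:ℝ) / 2) * B ^ (-(3:ℝ) / 2) := by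
  have hAB : 0 < A * B := mul_pos hA hB
  have hD3 : (A * B) ^ ((3:ℝ) / 2) ≤ D ^ 3 := by
    calc (A * B) ^ ((3:ℝ) / 2) ≤ (D ^ 2) ^ ((3:ℝ) / 2) := rpow_le_rpow hAB.le h (by norm_num)
      _ = D ^ 3 := by
        rw [← rpow_natCast, ← rpow_mul hD.le, ← rpow_natCast]
        norm_num
  rw [← mul_rpow hA.le hB.le, neg_div, rpow_neg hAB.le, one_div]
  exact inv_anti₀ (by positivity) hD3

theorem one_add_three_mul_div_pow_three_le {x y : ℝ} (hx : x ^ 2 < 1) (hy : y ^ 2 < 1) :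
    (1 + 3 * x ^ 2 * y ^ 2) / (1 - x ^ 2 * y ^ 2) ^ 3
      ≤ 4 * ((1 - x ^ 2) ^ (-(3:ℝ) / 2) * (1 - y ^ 2) ^ (-(3:ℝ) / 2)) := by
  have hxy : x ^ 2 * y ^ 2 ≤ y ^ 2 := mul_le_of_le_one_left (sq_nonneg y) hx.le
  have hD : 0 < 1 - x ^ 2 * y ^ 2 := by linarith
  have hAB : (1 - x ^ 2) * (1 - y ^ 2) ≤ (1 - x ^ 2 * y ^ 2) ^ 2 := by
    have := mul_le_sq_add_sub_mul (A := 1 - x ^ 2) (B := 1 - y ^ 2)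
      (by nlinarith) (by nlinarith [sq_nonneg x, sq_nonneg y])
    linarith
  calc (1 + 3 * x ^ 2 * y ^ 2) / (1 - x ^ 2 * y ^ 2) ^ 3 ≤ 4 * (1 / (1 - x ^ 2 * y ^ 2) ^ 3) := by
        rw [mul_one_div]
        gcongr
        linarith
    _ ≤ _ := by
        gcongr
        exact one_div_pow_three_le_rpow_mul_rpow (by linarith) (by linarith) hD hAB

/-- The mixed fourth partial derivative `∂⁴k/∂x²∂y²` equals
`(2/ln 2)(1+3x²y²)/(1-x²y²)³`, and this is bounded by
`(8/ln 2)(1-x²)^{-3/2}(1-y²)^{-3/2}`. -/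
theorem kernel_fourth_derivative (x y : ℝ)
    (hx : x ∈ Set.Ioo (0:ℝ) 1) (hy : y ∈ Set.Ioo (0:ℝ) 1) :
    deriv (deriv (fun a : ℝ => deriv (deriv (fun b : ℝ => kker a b)) y)) x
      = (2 / Real.log 2) * (1 + 3*x^2*y^2) / (1 - x^2*y^2)^3 ∧
    (2 / Real.log 2) * (1 + 3*x^2*y^2) / (1 - x^2*y^2)^3
      ≤ (8 / Real.log 2) * (1 - x^2) ^ (-(3:ℝ)/2) * (1 - y^2) ^ (-(3:ℝ)/2) := by
  obtain ⟨hx₀, hx₁⟩ := hx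
  obtain ⟨hy₀, hy₁⟩ := hy
  have hden {a : ℝ} (ha : a ∈ Ioo (-1) 1) : 1 - (a * y) ^ 2 ≠ 0 := by
    have ha2 : a ^ 2 < 1 := by nlinarith [ha.1, ha.2]
    nlinarith [mul_le_of_le_one_left (sq_nonneg y) ha2.le]
  refine ⟨?_, ?_⟩
  · have hF : EqOn (fun a ↦ deriv (deriv (fun b ↦ kker a b)) y)
        (fun a ↦ (a ^ 2 / (1 - (a * y) ^ 2) - 1 / (1 - y ^ 2)) / log 2) (Ioo (-1) 1) :=
      fun a ha ↦ deriv_deriv_kker_right ha ⟨by linarith, hy₁⟩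
    rw [eqOn_deriv_deriv_of_hasDerivAt isOpen_Ioo hF
      (fun a ha ↦ ((hasDerivAt_sq_div_one_sub_mul_sq y (hden ha)).sub_const _).div_const _)
      (fun a ha ↦ (hasDerivAt_two_mul_div_one_sub_mul_sq_sq y (hden ha)).div_const _)
      ⟨by linarith, hx₁⟩]
    ring
  · calc 2 / log 2 * (1 + 3 * x ^ 2 * y ^ 2) / (1 - x ^ 2 * y ^ 2) ^ 3
        = 2 / log 2 * ((1 + 3 * x ^ 2 * y ^ 2) / (1 - x ^ 2 * y ^ 2) ^ 3) := by ring
      _ ≤ 2 / log 2 * (4 * ((1 - x ^ 2) ^ (-(3:ℝ) / 2) * (1 - y ^ 2) ^ (-(3:ℝ) / 2))) := by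
        gcongr
        exact one_add_three_mul_div_pow_three_le (by nlinarith) (by nlinarith)
      _ = _ := by ring
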